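/- For every basic Boolean formula φ over the variables v_1, ..., v_n, there exists an instruction sequence X ∈ IS_br^na in which no primitive instruction contains the basic instruction out.set:false, such that X computes the Boolean function induced by φ and psize(X) ≤ c·size(φ) + c for a constant c independent of φ. -/

import Mathlib

/-- Boolean register names: `inp i` is input register `in:(i+1)`,
`aux i` is auxiliary register `aux:(i+1)`, `out` is the output register. -/
inductive Reg where
  | inp : ℕ → Reg
  | aux : ℕ → Reg
  | out : Reg
deriving DecidableEq

/-- Basic instructions: register reads/writes, and (for splitting instruction
sequences) `split p` and `reply p` for Boolean parameters `p`. -/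
inductive BInstr where
  | get : Reg → BInstr
  | set : Reg → Bool → BInstr
  | split : ℕ → BInstr
  | reply : ℕ → BInstr
deriving DecidableEq

/-- Primitive instructions. -/
inductive PInstr where
  | plain : BInstr → PInstr
  | pos : BInstr → PInstr
  | neg : BInstr → PInstr
  | jump : ℕ → PInstr
  | halt : PInstr
deriving DecidableEq

abbrev RegState := Reg → Bool

/-- State change caused by processing a basic instruction. -/
def BInstr.effect : BInstr → RegState → RegState
  | .set r b, s => Function.update s r b
  | _, s => s

/-- Reply produced by processing a basic instruction. -/
def BInstr.rpl : BInstr → RegState → Bool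
  | .get r, s => s r
  | .set _ b, _ => b
  | _, _ => false

def BInstr.isSplitReply : BInstr → Bool
  | .split _ => true
  | .reply _ => true
  | _ => false

/-- Single-thread execution of an instruction sequence on Boolean registers;
`none` means deadlock, `some s` means termination in register state `s`.
(`split`/`reply` instructions make no sense here and deadlock.) -/
def exec : List PInstr → RegState → Option RegState
  | [], _ => none
  | .plain a :: X, s =>
      if a.isSplitReply then none else exec X (a.effect s)
  | .pos a :: X, s =>
      if a.isSplitReply then none
      else if a.rpl s then exec X (a.effect s) else exec (X.drop 1) (a.effect s)
  | .neg a :: X, s =>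
      if a.isSplitReply then none
      else if a.rpl s then exec (X.drop 1) (a.effect s) else exec X (a.effect s)
  | .jump 0 :: _, _ => none
  | .jump (l+1) :: X, s => exec (X.drop l) s
  | .halt :: _, s => some s
termination_by X _ => X.length
decreasing_by all_goals (simp only [List.length_drop, List.length_cons]; omega)

/-- Initial register state: input registers `in:1 .. in:n` contain
`b 0, ..., b (n-1)`; all other registers contain `false`. -/
def initState (n : ℕ) (b : Fin n → Bool) : RegState := fun r =>
  match r with
  | .inp i => if h : i < n then b ⟨i, h⟩ else false
  | _ => false

/-- `X` computes the `n`-ary Boolean function `f`: for every input, execution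
terminates (does not deadlock) with the output register containing `f b`. -/
def Computes {n : ℕ} (f : (Fin n → Bool) → Bool) (X : List PInstr) : Prop :=
  ∀ b : Fin n → Bool, ∃ s : RegState,
    exec X (initState n b) = some s ∧ s Reg.out = f b

/-- Basic instructions allowed in `IS_br`. -/
def BrBasic : BInstr → Prop
  | .get (.inp _) => True
  | .get (.aux _) => True
  | .set (.aux _) _ => True
  | .set .out _ => True
  | _ => False

/-- Basic instructions allowed in `IS_br^na`. -/
def NaBasic : BInstr → Prop
  | .get (.inp _) => True
  | .set .out _ => True
  | _ => False

def InstrBasicOK (P : BInstr → Prop) : PInstr → Prop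
  | .plain a => P a
  | .pos a => P a
  | .neg a => P a
  | _ => True

/-- Membership of `IS_br` (non-empty, only allowed basic instructions). -/
def ISbr (X : List PInstr) : Prop :=
  X ≠ [] ∧ ∀ u ∈ X, InstrBasicOK BrBasic u

/-- Membership of `IS_br^na`. -/
def ISbrna (X : List PInstr) : Prop :=
  X ≠ [] ∧ ∀ u ∈ X, InstrBasicOK NaBasic u

/-- The primitive instruction contains the basic instruction `out.set:false`. -/
def UsesOutSetFalse : PInstr → Prop
  | .plain (.set .out false) => True
  | .pos (.set .out false) => True
  | .neg (.set .out false) => True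
  | _ => False

/-- The class PLIS of Boolean function families computable by
polynomial-length instruction sequences from `IS_br`. -/
def PLIS (F : (n : ℕ) → (Fin n → Bool) → Bool) : Prop :=
  ∃ h : Polynomial ℕ, ∀ n : ℕ, ∃ X : List PInstr,
    ISbr X ∧ Computes (F n) X ∧ X.length ≤ h.eval n

/-- Basic Boolean formulas over the variables `v_1, ..., v_n`
(`var i` is `v_{i+1}`), built with the connectives ¬, ∨ and ∧ only. -/
inductive BForm (n : ℕ) where
  | var : Fin n → BForm n
  | not : BForm n → BForm n
  | or : BForm n → BForm n → BForm n
  | and : BForm n → BForm n → BForm n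

/-- Size (number of symbols) of a basic Boolean formula. -/
def BForm.size {n : ℕ} : BForm n → ℕ
  | .var _ => 1
  | .not φ => φ.size + 1
  | .or φ ψ => φ.size + ψ.size + 1
  | .and φ ψ => φ.size + ψ.size + 1

/-- The Boolean function induced by a basic Boolean formula. -/
def BForm.evalF {n : ℕ} (b : Fin n → Bool) : BForm n → Bool
  | .var i => b i
  | .not φ => !(φ.evalF b)
  | .or φ ψ => φ.evalF b || ψ.evalF b
  | .and φ ψ => φ.evalF b && ψ.evalF b

/-!
A formula is compiled into a block that behaves like a single positive test instruction: it
continues right after itself if the formula holds and skips one further instruction otherwise.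
Negation, disjunction and conjunction each cost only two extra jumps, so the block is shorter
than twice the formula. Following it by `out.set:true; !` computes the formula without ever
writing `false` to the output register, which holds `false` initially.
-/

namespace BForm

variable {n : ℕ}

def compile : BForm n → List PInstr
  | .var i => [.pos (.get (.inp i))]
  | .not φ => compile φ ++ [.jump 3, .jump 1]
  | .or φ ψ => compile φ ++ [.jump ((compile ψ).length + 2), .jump 1] ++ compile ψ
  | .and φ ψ => compile φ ++ [.jump 2, .jump ((compile ψ).length + 2)] ++ compile ψ

theorem exec_compile_append (φ : BForm n) (s : RegState) (rest : List PInstr) :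
    exec (φ.compile ++ rest) s =
      if φ.evalF (fun i => s (.inp i)) then exec rest s else exec (rest.drop 1) s := by
  induction φ generalizing rest with
  | var i =>
    simp only [compile, List.cons_append, List.nil_append, exec, BInstr.isSplitReply,
      BInstr.rpl, BInstr.effect, Bool.false_eq_true, if_false, evalF]
    rfl
  | not φ ih =>
    simp only [compile, evalF, List.append_assoc, ih, List.cons_append, List.nil_append]
    rcases Bool.eq_false_or_eq_true (φ.evalF fun i => s (.inp i)) with h | h <;> simp [h, exec]
  | or φ ψ ihφ ihψ =>
    simp only [compile, evalF, List.append_assoc, ihφ, List.cons_append, List.nil_append]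
    rcases Bool.eq_false_or_eq_true (φ.evalF fun i => s (.inp i)) with h | h <;>
      simp [h, exec, ihψ]
  | and φ ψ ihφ ihψ =>
    simp only [compile, evalF, List.append_assoc, ihφ, List.cons_append, List.nil_append]
    rcases Bool.eq_false_or_eq_true (φ.evalF fun i => s (.inp i)) with h | h <;>
      simp [h, exec, ihψ]

theorem instrBasicOK_of_mem_compile {φ : BForm n} {u : PInstr} (hu : u ∈ φ.compile) :
    InstrBasicOK NaBasic u ∧ ¬ UsesOutSetFalse u := by
  induction φ with
  | var i =>
    simp only [compile, List.mem_singleton] at hu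
    subst hu
    exact ⟨trivial, id⟩
  | not φ ih =>
    simp only [compile, List.mem_append, List.mem_cons, List.not_mem_nil] at hu
    rcases hu with h | rfl | rfl | h
    exacts [ih h, ⟨trivial, id⟩, ⟨trivial, id⟩, h.elim]
  | or φ ψ ihφ ihψ | and φ ψ ihφ ihψ =>
    simp only [compile, List.mem_append, List.mem_cons, List.not_mem_nil] at hu
    rcases hu with (h | rfl | rfl | h) | h
    exacts [ihφ h, ⟨trivial, id⟩, ⟨trivial, id⟩, h.elim, ihψ h]

theorem length_compile_le (φ : BForm n) : φ.compile.length ≤ 2 * φ.size := by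
  induction φ <;> simp only [compile, size, List.length_append, List.length_cons,
    List.length_nil] <;> omega

def program (φ : BForm n) : List PInstr :=
  φ.compile ++ [.plain (.set .out true), .halt]

theorem instrBasicOK_of_mem_program {φ : BForm n} {u : PInstr} (hu : u ∈ φ.program) :
    InstrBasicOK NaBasic u ∧ ¬ UsesOutSetFalse u := by
  simp only [program, List.mem_append, List.mem_cons, List.not_mem_nil] at hu
  rcases hu with h | rfl | rfl | h
  exacts [instrBasicOK_of_mem_compile h, ⟨trivial, id⟩, ⟨trivial, id⟩, h.elim]

theorem computes_program (φ : BForm n) : Computes (fun b => φ.evalF b) φ.program := by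
  intro b
  have hinp : (fun i : Fin n => initState n b (.inp i)) = b := by
    funext i
    simp [initState]
  rw [program, exec_compile_append, hinp]
  cases h : φ.evalF b
  · exact ⟨initState n b, by simp [exec], by simp [initState, h]⟩
  · exact ⟨Function.update (initState n b) .out true,
      by simp [exec, BInstr.isSplitReply, BInstr.effect], by simp [h]⟩

theorem length_program_le (φ : BForm n) : φ.program.length ≤ 2 * φ.size + 2 := by
  simpa [program] using φ.length_compile_le

end BForm

/-- Theorem 2 of the paper: the Boolean function induced by a basic Boolean
formula is computed by an instruction sequence from `IS_br^na` of linear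
length in which `out.set:false` does not occur. -/
theorem statement1 :
    ∃ c : ℕ, ∀ (n : ℕ) (φ : BForm n),
      ∃ X : List PInstr, ISbrna X ∧
        (∀ u ∈ X, ¬ UsesOutSetFalse u) ∧
        Computes (fun b => BForm.evalF b φ) X ∧
        X.length ≤ c * φ.size + c := by
  refine ⟨2, fun n φ => ⟨φ.program, ⟨by simp [BForm.program], ?_⟩, ?_, φ.computes_program,
    φ.length_program_le⟩⟩
  · exact fun u hu => (BForm.instrBasicOK_of_mem_program hu).1
  · exact fun u hu => (BForm.instrBasicOK_of_mem_program hu).2
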